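/- arXiv:1310.3116 — 6 statements merged into one kernel-verified Lean document; each statement's English description precedes it below -/
import Mathlib

section
/- Let R be a commutative ring, N a natural number, and x : {0,…,N} → R. Let V be the (N+1)×(N+1) Vandermonde matrix with entries V_{i,k} = x_i^k, and let M be the (N+1)×(N+1) matrix with entries M_{k,j} = (−1)^{N−k} e_{N−k}^{(j)}, where e_r^{(j)} denotes the r-th elementary symmetric polynomial in the N variables x_0,…,x_{j−1},x_{j+1},…,x_N (omitting x_j). Then for all i,j ∈ {0,…,N}, the (i,j) entry of the product V·M equals ∏_{l=0, l≠j}^{N} (x_i − x_l); in particular V·M is the diagonal matrix with j-th diagonal entry ∏_{l≠j}(x_j − x_l). -/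
/-!
Column `j` of `M` lists the coefficients of `∏_{l ≠ j} (X - x l)` (Vieta's formulas), so the
`(i, j)` entry of `V * M` is this polynomial evaluated at `x i`. It vanishes for `i ≠ j`, since
then the factor `l = i` is zero.
-/

open Finset Polynomial

theorem Finset.prod_X_sub_C_coeff {R σ : Type*} [CommRing R] (s : Finset σ) (r : σ → R)
    {k : ℕ} (h : k ≤ #s) :
    (∏ i ∈ s, (X - C (r i))).coeff k =
      (-1) ^ (#s - k) * ∑ t ∈ s.powersetCard (#s - k), ∏ i ∈ t, r i := by
  have hcard : Multiset.card (s.val.map r) = #s := Multiset.card_map r s.val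
  have hmap : s.val.map (fun i => X - C (r i)) = (s.val.map r).map (fun t => X - C t) := by
    rw [Multiset.map_map]; rfl
  rw [Finset.prod, hmap, Multiset.prod_X_sub_C_coeff _ (hcard ▸ h), hcard, Finset.esymm_map_val]

theorem Finset.prod_sub_eq_sum_esymm_mul_pow {R σ : Type*} [CommRing R] {n : ℕ}
    (s : Finset σ) (hs : #s = n) (r : σ → R) (y : R) :
    ∏ i ∈ s, (y - r i) =
      ∑ k ∈ range (n + 1),
        ((-1) ^ (n - k) * ∑ t ∈ s.powersetCard (n - k), ∏ i ∈ t, r i) * y ^ k := by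
  subst hs
  have hdeg : (∏ i ∈ s, (X - C (r i))).natDegree < #s + 1 := by
    calc (∏ i ∈ s, (X - C (r i))).natDegree ≤ ∑ _i ∈ s, 1 :=
          (natDegree_prod_le _ _).trans (sum_le_sum fun i _ => natDegree_X_sub_C_le (r i))
      _ < #s + 1 := by simp
  have heval := eval_eq_sum_range' hdeg y
  rw [eval_prod] at heval
  simp only [eval_sub, eval_X, eval_C] at heval
  rw [heval]
  refine sum_congr rfl fun k hk => ?_
  rw [prod_X_sub_C_coeff s r (Nat.lt_succ_iff.mp (mem_range.mp hk))]

/-- Lemma 1 (Vandermonde times the signed elementary-symmetric matrix is diagonal):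
for a commutative ring `R` and `x : Fin (N+1) → R`, with `V` the Vandermonde matrix
`V i k = x i ^ k` and `M k j = (-1)^(N-k) * e_{N-k}^{(j)}` (elementary symmetric polynomial
in the variables `x l`, `l ≠ j`), one has `(V * M) i j = ∏_{l ≠ j} (x i - x l)`, and
`V * M` is the diagonal matrix with entries `∏_{l ≠ j} (x j - x l)`. -/
theorem vandermonde_mul_esymm_matrix
    (R : Type*) [CommRing R] (N : ℕ) (x : Fin (N + 1) → R)
    (M : Matrix (Fin (N + 1)) (Fin (N + 1)) R)
    (hM : ∀ k j : Fin (N + 1), M k j =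
      (-1 : R) ^ (N - k.val) *
        ∑ t ∈ (Finset.univ.erase j).powersetCard (N - k.val), ∏ l ∈ t, x l) :
    (∀ i j : Fin (N + 1),
      (Matrix.vandermonde x * M) i j = ∏ l ∈ Finset.univ.erase j, (x i - x l)) ∧
    Matrix.vandermonde x * M =
      Matrix.diagonal fun j => ∏ l ∈ Finset.univ.erase j, (x j - x l) := by
  have hentry : ∀ i j : Fin (N + 1),
      (Matrix.vandermonde x * M) i j = ∏ l ∈ univ.erase j, (x i - x l) := by
    intro i j
    have hcard : #(univ.erase j) = N := by simp
    rw [prod_sub_eq_sum_esymm_mul_pow _ hcard, ← Fin.sum_univ_eq_sum_range, Matrix.mul_apply]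
    simp only [Matrix.vandermonde_apply, hM, mul_comm]
  refine ⟨hentry, Matrix.ext fun i j => ?_⟩
  rw [hentry, Matrix.diagonal_apply]
  split_ifs with hij
  · rw [hij]
  · exact prod_eq_zero (mem_erase.mpr ⟨hij, mem_univ i⟩) (sub_self _)
end

section
/- Let F be a field, N a natural number, and x : {0,…,N} → F injective (the values x_0,…,x_N are mutually distinct). Then the Vandermonde matrix V with entries V_{i,k} = x_i^k is invertible, and the entries of its inverse are given explicitly by (V^{−1})_{k,j} = (−1)^{N−k} e_{N−k}^{(j)} / ∏_{l=0, l≠j}^{N} (x_j − x_l), for all k,j ∈ {0,…,N}, where e_r^{(j)} is the r-th elementary symmetric polynomial in the N values x_0,…,x_{j−1},x_{j+1},…,x_N (omitting x_j). -/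
/-!
The `j`-th column of `V⁻¹` is the coefficient vector of the Lagrange basis polynomial
`L_j = ∏_{l ≠ j} (X - x_l) / ∏_{l ≠ j} (x_j - x_l)`: multiplying a coefficient vector of a
polynomial `p` of degree `≤ N` by `V` gives the values `p (x_i)`, and `L_j (x_i) = δ_ij`.
By Vieta's formulas the coefficients of `∏_{l ≠ j} (X - x_l)` are the signed elementary
symmetric polynomials `(-1)^(N-k) e_{N-k}^{(j)}`.
-/

section

open Finset Polynomial

namespace Lagrange

theorem coeff_nodal {R ι : Type*} [CommRing R] (s : Finset ι) (v : ι → R) {k : ℕ}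
    (hk : k ≤ #s) :
    (nodal s v).coeff k = (-1) ^ (#s - k) * ∑ t ∈ s.powersetCard (#s - k), ∏ i ∈ t, v i := by
  have h := Multiset.prod_X_sub_C_coeff (s.val.map v) (k := k) (by simpa using hk)
  rwa [Multiset.map_map, Multiset.card_map, esymm_map_val] at h

variable {F ι : Type*} [Field F] [DecidableEq ι] {s : Finset ι} {v : ι → F} {i : ι}

theorem basis_eq_C_mul_nodal_erase (hi : i ∈ s) :
    Lagrange.basis s v i = C (∏ j ∈ s.erase i, (v i - v j))⁻¹ * nodal (s.erase i) v := by
  rw [basis_eq_prod_sub_inv_mul_nodal_div hi, ← nodal_erase_eq_nodal_div hi, nodalWeight,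
    prod_inv_distrib]

theorem coeff_basis (hi : i ∈ s) {k : ℕ} (hk : k ≤ #(s.erase i)) :
    (Lagrange.basis s v i).coeff k =
      ((-1) ^ (#(s.erase i) - k) *
          ∑ t ∈ (s.erase i).powersetCard (#(s.erase i) - k), ∏ l ∈ t, v l) /
        ∏ l ∈ s.erase i, (v i - v l) := by
  rw [basis_eq_C_mul_nodal_erase hi, coeff_C_mul, coeff_nodal _ _ hk, div_eq_inv_mul]

end Lagrange

namespace Matrix

theorem vandermonde_mulVec_coeff {R : Type*} [CommRing R] {n : ℕ} (v : Fin n → R) {p : R[X]}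
    (hp : p.natDegree < n) : vandermonde v *ᵥ (fun k => p.coeff k) = fun i => p.eval (v i) := by
  ext i
  rw [mulVec, dotProduct, eval_eq_sum_range' hp, ← Fin.sum_univ_eq_sum_range]
  simp only [vandermonde_apply, mul_comm]

theorem vandermonde_mul_coeff_basis {F : Type*} [Field F] {n : ℕ} {v : Fin n → F}
    (hv : Function.Injective v) :
    vandermonde v * of (fun k j : Fin n => (Lagrange.basis univ v j).coeff k) = 1 := by
  ext i j
  have hdeg : (Lagrange.basis univ v j).natDegree < n := by
    rw [Lagrange.natDegree_basis hv.injOn (mem_univ j), card_univ, Fintype.card_fin]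
    exact Nat.sub_lt j.pos one_pos
  calc (vandermonde v * of fun k j : Fin n => (Lagrange.basis univ v j).coeff k) i j
      = (vandermonde v *ᵥ fun k => (Lagrange.basis univ v j).coeff k) i := rfl
    _ = (Lagrange.basis univ v j).eval (v i) := by rw [vandermonde_mulVec_coeff v hdeg]
    _ = (1 : Matrix (Fin n) (Fin n) F) i j := by
      obtain rfl | hij := eq_or_ne i j
      · rw [Lagrange.eval_basis_self hv.injOn (mem_univ i), one_apply_eq]
      · rw [Lagrange.eval_basis_of_ne hij.symm (mem_univ i), one_apply_ne hij]

end Matrix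

end

open Finset in
/-- Explicit inverse of a Vandermonde matrix on mutually distinct values:
`(V⁻¹) k j = (-1)^(N-k) e_{N-k}^{(j)} / ∏_{l ≠ j} (x j - x l)`. -/
theorem vandermonde_inv_entries
    (F : Type*) [Field F] (N : ℕ) (x : Fin (N + 1) → F)
    (hx : Function.Injective x) :
    IsUnit (Matrix.vandermonde x) ∧
    ∀ k j : Fin (N + 1),
      (Matrix.vandermonde x)⁻¹ k j =
        ((-1 : F) ^ (N - k.val) *
          ∑ t ∈ (Finset.univ.erase j).powersetCard (N - k.val), ∏ l ∈ t, x l) /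
        ∏ l ∈ Finset.univ.erase j, (x j - x l) := by
  have hB := Matrix.vandermonde_mul_coeff_basis hx
  refine ⟨(Matrix.isUnit_iff_isUnit_det _).mpr (Matrix.isUnit_det_of_right_inverse hB),
    fun k j => ?_⟩
  have hN : #(univ.erase j) = N := by simp
  rw [Matrix.inv_eq_right_inv hB, Matrix.of_apply,
    Lagrange.coeff_basis (mem_univ j) (hN.symm ▸ k.is_le), hN]
end

section
/- (Proposition 2(1).) Assume P and Q are Hermitian. Then for each n ∈ {0,…,N}, every entry of the Wigner matrix W(n) is real: W(n)_{k,l} = conj(W(n)_{k,l}) for all k,l ∈ {0,…,N}. -/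
open Matrix

/-- The Weyl-symmetrized operator `Ĝ_{a,b}(P,Q)`: `1/C(a+b,a)` times the sum over all
subsets `S` of `{1,…,a+b}` of size `a` of the ordered product `X_1 ⋯ X_{a+b}` with
`X_i = P` if `i ∈ S` and `X_i = Q` otherwise. -/
noncomputable def weylG {N : ℕ} (P Q : Matrix (Fin (N + 1)) (Fin (N + 1)) ℂ) (a b : ℕ) :
    Matrix (Fin (N + 1)) (Fin (N + 1)) ℂ :=
  (((a + b).choose a : ℂ))⁻¹ •
    ∑ S ∈ Finset.univ.filter (fun S : Finset (Fin (a + b)) => S.card = a),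
      (List.ofFn fun i : Fin (a + b) => if i ∈ S then P else Q).prod

/-- The matrix `Z(n)` with entries `Z(n)_{a,b} = (Ĝ_{a,b}(P,Q))_{n,n}`, `a,b ∈ {0,…,N}`. -/
noncomputable def zMat {N : ℕ} (P Q : Matrix (Fin (N + 1)) (Fin (N + 1)) ℂ)
    (n : Fin (N + 1)) : Matrix (Fin (N + 1)) (Fin (N + 1)) ℂ :=
  Matrix.of fun a b : Fin (N + 1) => weylG P Q a.val b.val n n

/-- The Wigner matrix `W(n) = V(p)⁻ᵀ ⬝ Z(n) ⬝ V(q)⁻¹`, where `V(x)` is the Vandermonde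
matrix on the spectrum `x` (regarded as a complex matrix). -/
noncomputable def wignerW {N : ℕ} (P Q : Matrix (Fin (N + 1)) (Fin (N + 1)) ℂ)
    (p q : Fin (N + 1) → ℝ) (n : Fin (N + 1)) : Matrix (Fin (N + 1)) (Fin (N + 1)) ℂ :=
  ((Matrix.vandermonde fun k => (p k : ℂ))ᵀ)⁻¹ * zMat P Q n *
    (Matrix.vandermonde fun l => (q l : ℂ))⁻¹

/-!
Reversing a word in `P` and `Q` permutes the size-`a` sets of positions at which `P` occurs,
so for Hermitian `P`, `Q` the symmetrization `Ĝ_{a,b}(P,Q)` is Hermitian and `Z(n)`, made of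
its diagonal entries, is real. Vandermonde matrices on real nodes are real, and entrywise
conjugation commutes with products, transposes and inverses, so `W(n)` is real as well.
-/

theorem List.reverse_ofFn {α : Type*} {n : ℕ} (f : Fin n → α) :
    (List.ofFn f).reverse = List.ofFn (f ∘ Fin.rev) := by
  simp [List.ofFn_eq_map, ← List.map_reverse, List.finRange_reverse]

namespace Matrix

variable {m α : Type*} [Fintype m] [DecidableEq m]

theorem conjTranspose_prod_ofFn_of_isHermitian [Semiring α] [StarRing α] {k : ℕ}
    {f : Fin k → Matrix m m α} (hf : ∀ i, (f i).IsHermitian) :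
    (List.ofFn f).prodᴴ = (List.ofFn (f ∘ Fin.rev)).prod := by
  rw [conjTranspose_list_prod, List.map_ofFn,
    show conjTranspose ∘ f = f from funext fun i => hf i, List.reverse_ofFn]

theorem conjTranspose_prod_ofFn_ite_mem [Semiring α] [StarRing α] {P Q : Matrix m m α}
    (hP : P.IsHermitian) (hQ : Q.IsHermitian) {k : ℕ} (S : Finset (Fin k)) :
    (List.ofFn fun i => if i ∈ S then P else Q).prodᴴ =
      (List.ofFn fun i => if i ∈ Fin.revPerm.finsetCongr S then P else Q).prod := by
  rw [conjTranspose_prod_ofFn_of_isHermitian fun i => by split_ifs <;> assumption]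
  congr 2
  funext i
  simp [Finset.mem_map_equiv]

theorem map_starRingEnd_nonsing_inv [CommRing α] [StarRing α] (M : Matrix m m α) :
    M⁻¹.map (starRingEnd α) = (M.map (starRingEnd α))⁻¹ := by
  have h : ∀ A : Matrix m m α, A.map (starRingEnd α) = Aᴴᵀ := fun _ => rfl
  rw [h, h, conjTranspose_nonsing_inv, transpose_nonsing_inv]

theorem map_starRingEnd_vandermonde_ofReal {k : ℕ} (v : Fin k → ℝ) :
    (vandermonde fun i => (v i : ℂ)).map (starRingEnd ℂ) = vandermonde fun i => (v i : ℂ) := by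
  ext i j
  simp [vandermonde, ← Complex.ofReal_pow]

end Matrix

section Hermitian

variable {N : ℕ} {P Q : Matrix (Fin (N + 1)) (Fin (N + 1)) ℂ}

theorem isHermitian_weylG (hP : P.IsHermitian) (hQ : Q.IsHermitian) (a b : ℕ) :
    (weylG P Q a b).IsHermitian := by
  rw [weylG, Matrix.IsHermitian, Matrix.conjTranspose_smul, Matrix.conjTranspose_sum]
  congr 1
  · simp
  exact Finset.sum_equiv Fin.revPerm.finsetCongr (fun S => by simp) fun S _ =>
    Matrix.conjTranspose_prod_ofFn_ite_mem hP hQ S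

theorem map_starRingEnd_zMat (hP : P.IsHermitian) (hQ : Q.IsHermitian)
    (n : Fin (N + 1)) :
    (zMat P Q n).map (starRingEnd ℂ) = zMat P Q n := by
  ext a b
  exact (isHermitian_weylG hP hQ a b).apply n n

end Hermitian

theorem wignerW_real_general {N : ℕ} (P Q : Matrix (Fin (N + 1)) (Fin (N + 1)) ℂ)
    (hP : P.IsHermitian) (hQ : Q.IsHermitian)
    (p q : Fin (N + 1) → ℝ)
    (n : Fin (N + 1)) :
    ∀ k l : Fin (N + 1),
      wignerW P Q p q n k l = (starRingEnd ℂ) (wignerW P Q p q n k l) := by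
  have hW : (wignerW P Q p q n).map (starRingEnd ℂ) = wignerW P Q p q n := by
    rw [wignerW, Matrix.map_mul, Matrix.map_mul, Matrix.map_starRingEnd_nonsing_inv,
      Matrix.map_starRingEnd_nonsing_inv, Matrix.transpose_map,
      Matrix.map_starRingEnd_vandermonde_ofReal, Matrix.map_starRingEnd_vandermonde_ofReal,
      map_starRingEnd_zMat hP hQ]
  intro k l
  exact (congrFun₂ hW k l).symm

/-- Proposition 2(1): if `P` and `Q` are Hermitian, every entry of the Wigner matrix
`W(n)` is real. -/
theorem wignerW_real {N : ℕ} (P Q : Matrix (Fin (N + 1)) (Fin (N + 1)) ℂ)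
    (hP : P.IsHermitian) (hQ : Q.IsHermitian)
    (p q : Fin (N + 1) → ℝ) (hp : Function.Injective p) (hq : Function.Injective q)
    (n : Fin (N + 1)) :
    ∀ k l : Fin (N + 1),
      wignerW P Q p q n k l = (starRingEnd ℂ) (wignerW P Q p q n k l) :=
  wignerW_real_general P Q hP hQ p q n
end

section
/- (Proposition 2(2), position marginal.) Assume u_0,…,u_N is an orthonormal basis of ℂ^{N+1} such that Q u_l = q_l u_l for each l ∈ {0,…,N}. Then for each n and each l ∈ {0,…,N}, the column sums of the Wigner matrix recover the position probability distribution: ∑_{k=0}^{N} W(n)_{k,l} = |(u_l)_n|², where (u_l)_n denotes the n-th coordinate of u_l (the position wavefunction value φ_n(q_l)). -/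
open Matrix

/-! Summing the rows of `W(n)` multiplies it on the left by the all-ones row vector. The zeroth
column of `V(p)` is all ones, so `1ᵀ V(p)⁻ᵀ = e₀ᵀ` and the column sums of `W(n)` form the row
`Z(n)₀ V(q)⁻¹`. Since `Ĝ_{0,b} = Q^b`, expanding `Q` in its orthonormal eigenbasis gives
`Z(n)_{0,b} = ∑ₘ q_m^b |u_m(n)|²`, i.e. `Z(n)₀ = wᵀ V(q)` with `w_m = |u_m(n)|²`; hence the
column sums are `wᵀ`. -/

namespace Matrix

section Vandermonde

variable {n : ℕ}

theorem vandermonde_mulVec_single_zero {R : Type*} [CommRing R] (v : Fin (n + 1) → R) :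
    vandermonde v *ᵥ Pi.single 0 1 = 1 := by
  ext i
  simp

variable {K : Type*} [Field K] {v : Fin n → K}

theorem isUnit_det_vandermonde (hv : Function.Injective v) : IsUnit (vandermonde v).det :=
  isUnit_iff_ne_zero.mpr (det_vandermonde_ne_zero_iff.mpr hv)

theorem one_vecMul_transpose_inv_vandermonde {v : Fin (n + 1) → K}
    (hv : Function.Injective v) :
    1 ᵥ* (vandermonde v)ᵀ⁻¹ = Pi.single 0 1 := by
  rw [← transpose_nonsing_inv, vecMul_transpose, ← vandermonde_mulVec_single_zero v,
    mulVec_mulVec, nonsing_inv_mul _ (isUnit_det_vandermonde hv), one_mulVec]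

end Vandermonde

section Eigenbasis

variable {ι R : Type*} [Fintype ι] [DecidableEq ι] [CommRing R]
  {Q : Matrix ι ι R} {d : ι → R} {u : ι → ι → R}

theorem conjTranspose_mul_self_of_orthonormal [StarRing R]
    (hu : ∀ l l', star (u l) ⬝ᵥ u l' = if l = l' then 1 else 0) :
    (of u)ᵀᴴ * (of u)ᵀ = 1 := by
  ext l l'
  simpa [mul_apply, one_apply, dotProduct] using hu l l'

theorem mul_eq_mul_diagonal_of_eigenvectors (hQ : ∀ l, Q *ᵥ u l = d l • u l) :
    Q * (of u)ᵀ = (of u)ᵀ * diagonal d := by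
  ext i l
  rw [mul_diagonal]
  simpa [mul_apply, mulVec, dotProduct, mul_comm] using congrFun (hQ l) i

theorem pow_apply_of_orthonormal_eigenvectors [StarRing R]
    (hu : ∀ l l', star (u l) ⬝ᵥ u l' = if l = l' then 1 else 0)
    (hQ : ∀ l, Q *ᵥ u l = d l • u l) (b : ℕ) (i j : ι) :
    (Q ^ b) i j = ∑ m, d m ^ b * (u m i * star (u m j)) := by
  set U := (of u)ᵀ
  have hunitary : U * Uᴴ = 1 := mul_eq_one_comm.mp (conjTranspose_mul_self_of_orthonormal hu)
  have hsemiconj : SemiconjBy U (diagonal d) Q :=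
    (mul_eq_mul_diagonal_of_eigenvectors hQ).symm
  have hpow : Q ^ b = U * diagonal (d ^ b) * Uᴴ := by
    rw [← diagonal_pow, (hsemiconj.pow_right b).eq, mul_assoc, hunitary, mul_one]
  rw [hpow, mul_apply]
  simp_rw [mul_diagonal]
  simp [U, mul_assoc, mul_left_comm]

end Eigenbasis

end Matrix

open Matrix

theorem weylG_zero_left {N : ℕ} (P Q : Matrix (Fin (N + 1)) (Fin (N + 1)) ℂ) (b : ℕ) :
    weylG P Q 0 b = Q ^ b := by
  have hempty :
      Finset.univ.filter (fun S : Finset (Fin (0 + b)) => S.card = 0) = {∅} := by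
    ext S
    simp [Finset.card_eq_zero]
  rw [weylG, Nat.choose_zero_right, hempty, Finset.sum_singleton]
  simp [List.ofFn_const, List.prod_replicate]

theorem zMat_zero_eq_vecMul_vandermonde {N : ℕ} (P Q : Matrix (Fin (N + 1)) (Fin (N + 1)) ℂ)
    (q : Fin (N + 1) → ℝ) (u : Fin (N + 1) → (Fin (N + 1) → ℂ))
    (hortho : ∀ l l' : Fin (N + 1), star (u l) ⬝ᵥ u l' = if l = l' then 1 else 0)
    (heig : ∀ l : Fin (N + 1), Q *ᵥ u l = (q l : ℂ) • u l) (n : Fin (N + 1)) :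
    zMat P Q n 0 = (fun m => ((‖u m n‖ : ℝ) : ℂ) ^ 2) ᵥ* vandermonde fun l => (q l : ℂ) := by
  ext b
  simp only [zMat, of_apply, Fin.val_zero, weylG_zero_left,
    pow_apply_of_orthonormal_eigenvectors hortho heig, vecMul, dotProduct, vandermonde_apply]
  refine Finset.sum_congr rfl fun m _ => ?_
  rw [Complex.star_def, Complex.mul_conj', mul_comm]

/-- Proposition 2(2), position marginal: if `u₀,…,u_N` is an orthonormal basis of `ℂ^{N+1}`
of eigenvectors of `Q` with `Q uₗ = qₗ uₗ`, then the column sums of the Wigner matrix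
recover the position probability distribution: `∑ₖ W(n)_{k,l} = |(uₗ)ₙ|²`. -/
theorem wignerW_position_marginal {N : ℕ}
    (P Q : Matrix (Fin (N + 1)) (Fin (N + 1)) ℂ)
    (p q : Fin (N + 1) → ℝ) (hp : Function.Injective p) (hq : Function.Injective q)
    (u : Fin (N + 1) → (Fin (N + 1) → ℂ))
    (hortho : ∀ l l' : Fin (N + 1),
      (star (u l)) ⬝ᵥ (u l') = if l = l' then 1 else 0)
    (heig : ∀ l : Fin (N + 1), Q.mulVec (u l) = (q l : ℂ) • u l)
    (n : Fin (N + 1)) :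
    ∀ l : Fin (N + 1),
      ∑ k : Fin (N + 1), wignerW P Q p q n k l = ((‖u l n‖ : ℝ) : ℂ) ^ 2 := by
  intro l
  have hp' : Function.Injective fun k => (p k : ℂ) := Complex.ofReal_injective.comp hp
  have hq' : Function.Injective fun k => (q k : ℂ) := Complex.ofReal_injective.comp hq
  calc ∑ k, wignerW P Q p q n k l = (1 ᵥ* wignerW P Q p q n) l := (one_dotProduct _).symm
    _ = (zMat P Q n 0 ᵥ* (vandermonde fun k => (q k : ℂ))⁻¹) l := by
        rw [wignerW, ← vecMul_vecMul, ← vecMul_vecMul, one_vecMul_transpose_inv_vandermonde hp',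
          single_one_vecMul, row]
    _ = ((‖u l n‖ : ℝ) : ℂ) ^ 2 := by
        rw [zMat_zero_eq_vecMul_vandermonde P Q q u hortho heig, vecMul_vecMul,
          mul_nonsing_inv _ (isUnit_det_vandermonde hq'), vecMul_one]
end

section
/- (Vanishing of odd moments.) Let P and Q be Hermitian (N+1)×(N+1) complex matrices, each tridiagonal with zero diagonal (entries nonzero only when the row and column indices differ by 1). Assume moreover that all entries of Q are real and all entries of P are purely imaginary. Then for each n ∈ {0,…,N}, the matrix Z(n) with entries Z(n)_{a,b} = (Ĝ_{a,b}(P,Q))_{n,n} satisfies Z(n)_{a,b} = 0 whenever a is odd or b is odd. -/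
open Finset Matrix

theorem List.reverse_ofFn_s11 {α : Type*} {m : ℕ} (f : Fin m → α) :
    (List.ofFn f).reverse = List.ofFn (fun i => f i.rev) := by
  rw [List.ofFn_eq_map, ← List.map_reverse, List.finRange_reverse, List.map_map,
    ← List.ofFn_eq_map]
  rfl

theorem List.prod_ofFn_smul {M R : Type*} [CommMonoid R] [Monoid M] [MulAction R M]
    [IsScalarTower R M M] [SMulCommClass R M M] {m : ℕ} (c : Fin m → R) (f : Fin m → M) :
    (List.ofFn fun i => c i • f i).prod = (∏ i, c i) • (List.ofFn f).prod := by
  induction m with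
  | zero => simp
  | succ k ih =>
    simp only [List.ofFn_succ, List.prod_cons, Fin.prod_univ_succ, ih, smul_mul_smul_comm]

section Monoid

variable {M : Type*}

def wordProd [Monoid M] (x y : M) {m : ℕ} (S : Finset (Fin m)) : M :=
  (List.ofFn fun i : Fin m => if i ∈ S then x else y).prod

def wordSum [Monoid M] [AddCommMonoid M] (x y : M) (m a : ℕ) : M :=
  ∑ S : Finset (Fin m) with S.card = a, wordProd x y S

theorem wordProd_neg_left [Ring M] (x y : M) {m : ℕ} (S : Finset (Fin m)) :
    wordProd (-x) y S = (-1) ^ S.card * wordProd x y S := by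
  have hsign : ∀ i, (if i ∈ S then -x else y) =
      (if i ∈ S then (-1 : ℤ) else 1) • (if i ∈ S then x else y) := by
    intro i; split_ifs <;> simp
  simp only [wordProd, hsign, List.prod_ofFn_smul, prod_ite_mem, univ_inter, prod_const]
  rw [zsmul_eq_mul, Int.cast_pow, Int.cast_neg, Int.cast_one]

theorem wordSum_neg_left [Ring M] (x y : M) (m a : ℕ) :
    wordSum (-x) y m a = (-1) ^ a * wordSum x y m a := by
  rw [wordSum, wordSum, mul_sum]
  refine sum_congr rfl fun S hS => ?_
  rw [wordProd_neg_left, (mem_filter.mp hS).2]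

end Monoid

section Transpose

variable {ι R : Type*} [Fintype ι] [DecidableEq ι] [CommSemiring R]

theorem wordProd_transpose (x y : Matrix ι ι R) {m : ℕ} (S : Finset (Fin m)) :
    (wordProd x y S)ᵀ = wordProd xᵀ yᵀ (S.map Fin.revPerm.toEmbedding) := by
  rw [wordProd, wordProd, transpose_list_prod, List.map_ofFn, List.reverse_ofFn_s11]
  congr 2 with i
  simp only [Function.comp_apply, mem_map_equiv, Fin.revPerm_symm, Fin.revPerm_apply]
  split_ifs <;> rfl

theorem wordSum_transpose (x y : Matrix ι ι R) (m a : ℕ) :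
    (wordSum x y m a)ᵀ = wordSum xᵀ yᵀ m a := by
  rw [wordSum, wordSum, transpose_sum]
  refine sum_equiv Fin.revPerm.finsetCongr (fun S => ?_) (fun S _ => wordProd_transpose x y S)
  simp

end Transpose

section TransposeRing

variable {ι R : Type*} [Fintype ι] [DecidableEq ι] [CommRing R]

theorem wordSum_apply_self_eq_zero_of_transpose [IsAddTorsionFree R]
    {x y : Matrix ι ι R} (hx : xᵀ = -x) (hy : yᵀ = y)
    (m : ℕ) {a : ℕ} (ha : Odd a) (i : ι) : wordSum x y m a i i = 0 := by
  have h := congrFun₂ (wordSum_transpose x y m a) i i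
  rw [transpose_apply, hx, hy, wordSum_neg_left, ha.neg_one_pow, neg_one_mul, neg_apply] at h
  exact self_eq_neg.mp h

end TransposeRing

section Tridiagonal

variable {n : ℕ} {R : Type*}

def Matrix.IsHollowTridiagonal [Zero R] (x : Matrix (Fin n) (Fin n) R) : Prop :=
  ∀ i j : Fin n, j.val ≠ i.val + 1 → i.val ≠ j.val + 1 → x i j = 0

theorem Matrix.IsHollowTridiagonal.list_prod_apply_eq_zero [Semiring R]
    {L : List (Matrix (Fin n) (Fin n) R)} (hL : ∀ x ∈ L, IsHollowTridiagonal x) {i j : Fin n}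
    (hij : (i.val + L.length) % 2 ≠ j.val % 2) : L.prod i j = 0 := by
  induction L generalizing i with
  | nil =>
    exact one_apply_ne fun h => hij (by simp [h])
  | cons x L ih =>
    rw [List.prod_cons, mul_apply]
    refine sum_eq_zero fun k _ => ?_
    by_cases hk : k.val = i.val + 1 ∨ i.val = k.val + 1
    · rw [ih (fun y hy => hL y (List.mem_cons_of_mem _ hy)) (by grind), mul_zero]
    · push Not at hk
      rw [hL x List.mem_cons_self i k hk.1 hk.2, zero_mul]

theorem wordSum_apply_self_eq_zero_of_odd [Semiring R] {x y : Matrix (Fin n) (Fin n) R}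
    (hx : IsHollowTridiagonal x) (hy : IsHollowTridiagonal y) {m : ℕ} (hm : Odd m) (a : ℕ)
    (i : Fin n) : wordSum x y m a i i = 0 := by
  rw [wordSum, Matrix.sum_apply]
  refine sum_eq_zero fun S _ => IsHollowTridiagonal.list_prod_apply_eq_zero ?_ ?_
  · simp only [List.mem_ofFn]
    rintro _ ⟨k, rfl⟩
    split_ifs
    exacts [hx, hy]
  · rw [List.length_ofFn]
    grind

end Tridiagonal

theorem Matrix.IsHermitian.transpose_eq_neg_of_re_eq_zero {ι : Type*} {x : Matrix ι ι ℂ}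
    (hx : x.IsHermitian) (hre : ∀ i j, (x i j).re = 0) : xᵀ = -x := by
  ext i j
  rw [transpose_apply, neg_apply, ← hx.apply j i]
  apply Complex.ext <;> simp [hre]

theorem Matrix.IsHermitian.transpose_eq_self_of_im_eq_zero {ι : Type*} {x : Matrix ι ι ℂ}
    (hx : x.IsHermitian) (him : ∀ i j, (x i j).im = 0) : xᵀ = x := by
  ext i j
  rw [transpose_apply, ← hx.apply j i]
  exact Complex.conj_eq_iff_im.mpr (him i j)

theorem weylG_eq_smul_wordSum {N : ℕ} (P Q : Matrix (Fin (N + 1)) (Fin (N + 1)) ℂ) (a b : ℕ) :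
    weylG P Q a b = (((a + b).choose a : ℂ))⁻¹ • wordSum P Q (a + b) a :=
  rfl

/-- Vanishing of odd moments: if `P`, `Q` are Hermitian, tridiagonal with zero diagonal,
`Q` has real entries and `P` has purely imaginary entries, then `Z(n)_{a,b} = 0` whenever
`a` is odd or `b` is odd. -/
theorem zMat_odd_vanish {N : ℕ}
    (P Q : Matrix (Fin (N + 1)) (Fin (N + 1)) ℂ)
    (hPh : P.IsHermitian) (hQh : Q.IsHermitian)
    (hPtri : ∀ i j : Fin (N + 1), j.val ≠ i.val + 1 → i.val ≠ j.val + 1 → P i j = 0)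
    (hQtri : ∀ i j : Fin (N + 1), j.val ≠ i.val + 1 → i.val ≠ j.val + 1 → Q i j = 0)
    (hQreal : ∀ i j : Fin (N + 1), (Q i j).im = 0)
    (hPimag : ∀ i j : Fin (N + 1), (P i j).re = 0)
    (n : Fin (N + 1)) :
    ∀ a b : Fin (N + 1), (Odd a.val ∨ Odd b.val) → zMat P Q n a b = 0 := by
  intro a b hab
  have hdiag : wordSum P Q (a + b) a n n = 0 := by
    by_cases ha : Odd a.val
    · exact wordSum_apply_self_eq_zero_of_transpose (hPh.transpose_eq_neg_of_re_eq_zero hPimag)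
        (hQh.transpose_eq_self_of_im_eq_zero hQreal) _ ha n
    · exact wordSum_apply_self_eq_zero_of_odd hPtri hQtri (by grind) _ n
  rw [zMat, of_apply, weylG_eq_smul_wordSum, Matrix.smul_apply, hdiag, smul_zero]
end

section
/- (Proposition 3, phase-space symmetries.) Assume: (i) P and Q are Hermitian, tridiagonal with zero diagonal (entries nonzero only when the row and column indices differ by 1), all entries of Q are real and all entries of P are purely imaginary; (ii) the spectra are symmetric, i.e. p_k = −p_{N−k} and q_l = −q_{N−l} for all k,l ∈ {0,…,N}. Then for each n ∈ {0,…,N} the Wigner matrix satisfies the reflection symmetries W(n)_{k,l} = W(n)_{N−k,l} = W(n)_{k,N−l} = W(n)_{N−k,N−l} for all k,l ∈ {0,…,N}. -/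
/-! The entries of `P` and `Q` vanish unless `i + j` is odd, so the diagonal of a product of an
odd number of them vanishes; and `Pᵀ = -P`, `Qᵀ = Q`, which reverses each word of `Ĝ_{a,b}` and
gives `Ĝ_{a,b}ᵀ = (-1)^a Ĝ_{a,b}`. Hence `Z(n)_{a,b} = 0` unless `a` and `b` are both even,
i.e. `J Z(n) = Z(n) = Z(n) J` for `J = diag((-1)^j)`. On the other side, a spectrum symmetric
about `0` gives `V(x ∘ rev) = V(-x) = V(x) J`, so reversing the rows of `V(p)⁻ᵀ` or the columns
of `V(q)⁻¹` inserts a factor `J` next to `Z(n)`, where it is absorbed. -/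

open Matrix

namespace List

theorem reverse_ofFn_s12 {α : Type*} {m : ℕ} (f : Fin m → α) :
    (ofFn f).reverse = ofFn fun i => f i.rev := by
  refine ext_getElem (by simp) fun k _ _ => ?_
  simp only [getElem_reverse, List.getElem_ofFn, length_ofFn, Fin.rev]
  congr 2
  omega

theorem prod_ofFn_smul_s12 {R M : Type*} [CommMonoid R] [Monoid M] [MulAction R M]
    [IsScalarTower R M M] [SMulCommClass R M M] {m : ℕ} (c : Fin m → R) (f : Fin m → M) :
    (ofFn fun i => c i • f i).prod = (∏ i, c i) • (ofFn f).prod := by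
  induction m with
  | zero => simp
  | succ m ih =>
    rw [ofFn_succ, ofFn_succ (f := f), prod_cons, prod_cons, ih, Fin.prod_univ_succ,
      smul_mul_smul_comm]

end List

namespace Matrix

theorem list_prod_apply_eq_zero_of_odd {R : Type*} [Semiring R] {m : ℕ}
    (L : List (Matrix (Fin m) (Fin m) R))
    (hL : ∀ M ∈ L, ∀ i j : Fin m, Even ((i : ℕ) + j) → M i j = 0) (i j : Fin m)
    (hij : Odd ((i : ℕ) + j + L.length)) : L.prod i j = 0 := by
  induction L generalizing i with
  | nil =>
    have : i ≠ j := by rintro rfl; exact Nat.not_odd_iff_even.mpr ⟨_, rfl⟩ hij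
    simp [one_apply_ne this]
  | cons M L ih =>
    rw [List.prod_cons, mul_apply]
    refine Finset.sum_eq_zero fun t _ => ?_
    rcases Nat.even_or_odd ((i : ℕ) + t) with h | h
    · rw [hL M List.mem_cons_self i t h, zero_mul]
    · have ht : Odd ((t : ℕ) + j + L.length) := by
        rw [List.length_cons, Nat.odd_iff] at hij
        rw [Nat.odd_iff] at h ⊢
        omega
      rw [ih (fun M' hM' => hL M' (List.mem_cons_of_mem _ hM')) t ht, mul_zero]

theorem IsHermitian.transpose_eq_neg_of_re_eq_zero_s12 {n : Type*} {P : Matrix n n ℂ}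
    (hP : P.IsHermitian) (hre : ∀ i j, (P i j).re = 0) : Pᵀ = -P := by
  ext i j
  rw [transpose_apply, ← hP.apply, neg_apply]
  apply Complex.ext <;> simp [hre]

theorem IsHermitian.transpose_eq_self_of_im_eq_zero_s12 {n : Type*} {Q : Matrix n n ℂ}
    (hQ : Q.IsHermitian) (him : ∀ i j, (Q i j).im = 0) : Qᵀ = Q := by
  ext i j
  rw [transpose_apply, ← hQ.apply]
  apply Complex.ext <;> simp [him]

theorem apply_eq_zero_of_even_of_tridiagonal {R : Type*} [Zero R] {m : ℕ}
    {M : Matrix (Fin m) (Fin m) R}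
    (hM : ∀ i j : Fin m, j.val ≠ i.val + 1 → i.val ≠ j.val + 1 → M i j = 0)
    (i j : Fin m) (h : Even ((i : ℕ) + j)) : M i j = 0 := by
  rw [Nat.even_iff] at h
  exact hM i j (by omega) (by omega)

end Matrix

section WeylWord

variable {n R : Type*} [Fintype n] [DecidableEq n]

def weylWord [Semiring R] (P Q : Matrix n n R) {m : ℕ} (S : Finset (Fin m)) : Matrix n n R :=
  (List.ofFn fun i : Fin m => if i ∈ S then P else Q).prod

theorem weylWord_transpose [CommSemiring R] (P Q : Matrix n n R) {m : ℕ} (S : Finset (Fin m)) :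
    (weylWord P Q S)ᵀ = weylWord Pᵀ Qᵀ (S.map Fin.revPerm.toEmbedding) := by
  rw [weylWord, transpose_list_prod, List.map_ofFn, List.reverse_ofFn_s12, weylWord]
  congr 2
  funext i
  simp only [Function.comp_apply, Finset.mem_map_equiv, Fin.revPerm_symm, Fin.revPerm_apply]
  split_ifs <;> rfl

theorem weylWord_smul_left [CommSemiring R] (c : R) (P Q : Matrix n n R) {m : ℕ}
    (S : Finset (Fin m)) : weylWord (c • P) Q S = c ^ S.card • weylWord P Q S := by
  have hword : (fun i : Fin m => if i ∈ S then c • P else Q) =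
      fun i => (if i ∈ S then c else 1) • if i ∈ S then P else Q := by
    funext i
    split_ifs <;> simp
  rw [weylWord, hword, List.prod_ofFn_smul_s12, Finset.prod_ite_mem, Finset.univ_inter,
    Finset.prod_const, weylWord]

theorem weylWord_apply_eq_zero_of_odd [Semiring R] {m : ℕ} {P Q : Matrix (Fin m) (Fin m) R}
    (hP : ∀ i j : Fin m, Even ((i : ℕ) + j) → P i j = 0)
    (hQ : ∀ i j : Fin m, Even ((i : ℕ) + j) → Q i j = 0)
    {k : ℕ} (S : Finset (Fin k)) (i j : Fin m) (hij : Odd ((i : ℕ) + j + k)) :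
    weylWord P Q S i j = 0 := by
  refine list_prod_apply_eq_zero_of_odd _ ?_ i j (by rwa [List.length_ofFn])
  intro M hM
  obtain ⟨t, rfl⟩ := List.mem_ofFn.mp hM
  split_ifs
  exacts [hP, hQ]

end WeylWord

section WeylG

variable {N : ℕ}

theorem weylG_eq_sum_weylWord (P Q : Matrix (Fin (N + 1)) (Fin (N + 1)) ℂ) (a b : ℕ) :
    weylG P Q a b = (((a + b).choose a : ℂ))⁻¹ •
      ∑ S ∈ Finset.univ.filter (fun S : Finset (Fin (a + b)) => S.card = a), weylWord P Q S :=
  rfl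

theorem weylG_transpose (P Q : Matrix (Fin (N + 1)) (Fin (N + 1)) ℂ) (a b : ℕ) :
    (weylG P Q a b)ᵀ = weylG Pᵀ Qᵀ a b := by
  rw [weylG_eq_sum_weylWord, weylG_eq_sum_weylWord, transpose_smul, transpose_sum]
  congr 1
  refine Finset.sum_equiv (Equiv.finsetCongr Fin.revPerm) (by simp) fun S _ => ?_
  rw [weylWord_transpose]
  rfl

theorem weylG_smul_left (c : ℂ) (P Q : Matrix (Fin (N + 1)) (Fin (N + 1)) ℂ) (a b : ℕ) :
    weylG (c • P) Q a b = c ^ a • weylG P Q a b := by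
  simp only [weylG_eq_sum_weylWord, Finset.smul_sum]
  refine Finset.sum_congr rfl fun S hS => ?_
  rw [weylWord_smul_left, (Finset.mem_filter.mp hS).2, smul_comm]

theorem weylG_apply_self_eq_zero_of_odd_add {P Q : Matrix (Fin (N + 1)) (Fin (N + 1)) ℂ}
    (hP : ∀ i j : Fin (N + 1), Even ((i : ℕ) + j) → P i j = 0)
    (hQ : ∀ i j : Fin (N + 1), Even ((i : ℕ) + j) → Q i j = 0)
    {a b : ℕ} (hab : Odd (a + b)) (i : Fin (N + 1)) : weylG P Q a b i i = 0 := by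
  have hi : Odd ((i : ℕ) + i + (a + b)) := by
    rw [Nat.odd_iff] at hab ⊢
    omega
  rw [weylG_eq_sum_weylWord, Matrix.smul_apply, Matrix.sum_apply,
    Finset.sum_eq_zero fun S _ => weylWord_apply_eq_zero_of_odd hP hQ S i i hi, smul_zero]

theorem weylG_apply_self_eq_zero_of_odd_left {P Q : Matrix (Fin (N + 1)) (Fin (N + 1)) ℂ}
    (hP : Pᵀ = -P) (hQ : Qᵀ = Q) {a : ℕ} (b : ℕ) (ha : Odd a) (i : Fin (N + 1)) :
    weylG P Q a b i i = 0 := by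
  have hG : (weylG P Q a b)ᵀ = -weylG P Q a b := by
    rw [weylG_transpose, hP, hQ, ← neg_one_smul ℂ P, weylG_smul_left, ha.neg_one_pow,
      neg_one_smul]
  exact self_eq_neg.mp (congrFun₂ hG i i)

end WeylG

section ParityDiagonal

variable {R : Type*} [CommRing R] {m : ℕ}

variable (R m) in
def parityDiagonal : Matrix (Fin m) (Fin m) R :=
  diagonal fun j => (-1) ^ (j : ℕ)

theorem parityDiagonal_mul_self : parityDiagonal R m * parityDiagonal R m = 1 := by
  rw [parityDiagonal, diagonal_mul_diagonal, ← diagonal_one]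
  congr 1
  funext j
  rw [← pow_add, Even.neg_one_pow ⟨_, rfl⟩]

theorem parityDiagonal_mul_eq_self {A : Matrix (Fin m) (Fin m) R}
    (hA : ∀ i j : Fin m, Odd (i : ℕ) → A i j = 0) : parityDiagonal R m * A = A := by
  ext i j
  rw [parityDiagonal, diagonal_mul]
  rcases Nat.even_or_odd i with hi | hi
  · rw [hi.neg_one_pow, one_mul]
  · rw [hA i j hi, mul_zero]

theorem mul_parityDiagonal_eq_self {A : Matrix (Fin m) (Fin m) R}
    (hA : ∀ i j : Fin m, Odd (j : ℕ) → A i j = 0) : A * parityDiagonal R m = A := by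
  ext i j
  rw [parityDiagonal, mul_diagonal]
  rcases Nat.even_or_odd j with hj | hj
  · rw [hj.neg_one_pow, mul_one]
  · rw [hA i j hj, zero_mul]

theorem vandermonde_neg (v : Fin m → R) :
    vandermonde (-v) = vandermonde v * parityDiagonal R m := by
  ext i j
  rw [parityDiagonal, mul_diagonal, vandermonde_apply, vandermonde_apply, Pi.neg_apply, neg_pow,
    mul_comm]

theorem inv_vandermonde_submatrix_rev {v : Fin m → R} (hv : ∀ k, v k.rev = -v k) :
    (vandermonde v)⁻¹.submatrix id Fin.rev = parityDiagonal R m * (vandermonde v)⁻¹ := by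
  have hV : (vandermonde v).submatrix Fin.revPerm (Equiv.refl _) =
      vandermonde v * parityDiagonal R m := by
    rw [← vandermonde_neg]
    ext i j
    simp [vandermonde_apply, hv]
  have hinv := congrArg Inv.inv hV
  rwa [inv_submatrix_equiv, Matrix.mul_inv_rev, inv_eq_left_inv parityDiagonal_mul_self] at hinv

end ParityDiagonal

section Wigner

variable {N : ℕ} {P Q : Matrix (Fin (N + 1)) (Fin (N + 1)) ℂ}

theorem zMat_apply_eq_zero (hP : Pᵀ = -P) (hQ : Qᵀ = Q)
    (hPeven : ∀ i j : Fin (N + 1), Even ((i : ℕ) + j) → P i j = 0)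
    (hQeven : ∀ i j : Fin (N + 1), Even ((i : ℕ) + j) → Q i j = 0)
    (n : Fin (N + 1)) {a b : Fin (N + 1)} (hab : Odd (a : ℕ) ∨ Odd (b : ℕ)) :
    zMat P Q n a b = 0 := by
  rcases Nat.even_or_odd a with ha | ha
  · exact weylG_apply_self_eq_zero_of_odd_add hPeven hQeven
      (ha.add_odd (hab.resolve_left (Nat.not_odd_iff_even.mpr ha))) n
  · exact weylG_apply_self_eq_zero_of_odd_left hP hQ b ha n

theorem wignerW_submatrix_rev_left {p : Fin (N + 1) → ℝ} (hp : ∀ k, p k.rev = -p k)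
    (q : Fin (N + 1) → ℝ) (n : Fin (N + 1))
    (hZ : ∀ a b : Fin (N + 1), Odd (a : ℕ) → zMat P Q n a b = 0) :
    (wignerW P Q p q n).submatrix Fin.rev id = wignerW P Q p q n := by
  have hV : ((vandermonde fun k => (p k : ℂ))ᵀ)⁻¹.submatrix Fin.rev id =
      ((vandermonde fun k => (p k : ℂ))ᵀ)⁻¹ * parityDiagonal ℂ (N + 1) := by
    rw [← transpose_nonsing_inv, ← transpose_submatrix,
      inv_vandermonde_submatrix_rev (by simp [hp]), transpose_mul, parityDiagonal,
      diagonal_transpose]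
  rw [wignerW, submatrix_mul _ _ _ id _ Function.bijective_id,
    submatrix_mul _ _ _ id _ Function.bijective_id, submatrix_id_id, submatrix_id_id, hV,
    Matrix.mul_assoc _ (parityDiagonal ℂ _), parityDiagonal_mul_eq_self hZ]

theorem wignerW_submatrix_rev_right (p : Fin (N + 1) → ℝ) {q : Fin (N + 1) → ℝ}
    (hq : ∀ l, q l.rev = -q l) (n : Fin (N + 1))
    (hZ : ∀ a b : Fin (N + 1), Odd (b : ℕ) → zMat P Q n a b = 0) :
    (wignerW P Q p q n).submatrix id Fin.rev = wignerW P Q p q n := by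
  rw [wignerW, submatrix_mul _ _ _ id _ Function.bijective_id, submatrix_id_id,
    inv_vandermonde_submatrix_rev (by simp [hq]), ← Matrix.mul_assoc,
    Matrix.mul_assoc _ (zMat P Q n), mul_parityDiagonal_eq_self hZ]

end Wigner

theorem wignerW_reflection_symm_general {N : ℕ}
    (P Q : Matrix (Fin (N + 1)) (Fin (N + 1)) ℂ)
    (hPh : P.IsHermitian) (hQh : Q.IsHermitian)
    (hPtri : ∀ i j : Fin (N + 1), j.val ≠ i.val + 1 → i.val ≠ j.val + 1 → P i j = 0)
    (hQtri : ∀ i j : Fin (N + 1), j.val ≠ i.val + 1 → i.val ≠ j.val + 1 → Q i j = 0)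
    (hQreal : ∀ i j : Fin (N + 1), (Q i j).im = 0)
    (hPimag : ∀ i j : Fin (N + 1), (P i j).re = 0)
    (p q : Fin (N + 1) → ℝ)
    (hpsym : ∀ k : Fin (N + 1), p k.rev = -p k)
    (hqsym : ∀ l : Fin (N + 1), q l.rev = -q l)
    (n : Fin (N + 1)) :
    ∀ k l : Fin (N + 1),
      wignerW P Q p q n k l = wignerW P Q p q n k.rev l ∧
      wignerW P Q p q n k l = wignerW P Q p q n k l.rev ∧
      wignerW P Q p q n k l = wignerW P Q p q n k.rev l.rev := by
  have hZ : ∀ a b : Fin (N + 1), Odd (a : ℕ) ∨ Odd (b : ℕ) → zMat P Q n a b = 0 :=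
    fun a b => zMat_apply_eq_zero (hPh.transpose_eq_neg_of_re_eq_zero_s12 hPimag)
      (hQh.transpose_eq_self_of_im_eq_zero_s12 hQreal)
      (apply_eq_zero_of_even_of_tridiagonal hPtri) (apply_eq_zero_of_even_of_tridiagonal hQtri) n
  have hrow := wignerW_submatrix_rev_left hpsym q n fun a b ha => hZ a b (Or.inl ha)
  have hcol := wignerW_submatrix_rev_right p hqsym n fun a b hb => hZ a b (Or.inr hb)
  intro k l
  have hk : wignerW P Q p q n k.rev l = wignerW P Q p q n k l := congrFun₂ hrow k l
  have hl : wignerW P Q p q n k l.rev = wignerW P Q p q n k l := congrFun₂ hcol k l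
  have hkl : wignerW P Q p q n k.rev l.rev = wignerW P Q p q n k l.rev := congrFun₂ hrow k l.rev
  exact ⟨hk.symm, hl.symm, by rw [hkl, hl]⟩

/-- Proposition 3, phase-space symmetries: if `P`, `Q` are Hermitian, tridiagonal with zero
diagonal, `Q` real, `P` purely imaginary, and the spectra are symmetric
(`p_{N-k} = -p_k`, `q_{N-l} = -q_l`), then the Wigner matrix satisfies the reflection
symmetries `W(n)_{k,l} = W(n)_{N-k,l} = W(n)_{k,N-l} = W(n)_{N-k,N-l}`. -/
theorem wignerW_reflection_symm {N : ℕ}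
    (P Q : Matrix (Fin (N + 1)) (Fin (N + 1)) ℂ)
    (hPh : P.IsHermitian) (hQh : Q.IsHermitian)
    (hPtri : ∀ i j : Fin (N + 1), j.val ≠ i.val + 1 → i.val ≠ j.val + 1 → P i j = 0)
    (hQtri : ∀ i j : Fin (N + 1), j.val ≠ i.val + 1 → i.val ≠ j.val + 1 → Q i j = 0)
    (hQreal : ∀ i j : Fin (N + 1), (Q i j).im = 0)
    (hPimag : ∀ i j : Fin (N + 1), (P i j).re = 0)
    (p q : Fin (N + 1) → ℝ) (hp : Function.Injective p) (hq : Function.Injective q)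
    (hpsym : ∀ k : Fin (N + 1), p k.rev = -p k)
    (hqsym : ∀ l : Fin (N + 1), q l.rev = -q l)
    (n : Fin (N + 1)) :
    ∀ k l : Fin (N + 1),
      wignerW P Q p q n k l = wignerW P Q p q n k.rev l ∧
      wignerW P Q p q n k l = wignerW P Q p q n k l.rev ∧
      wignerW P Q p q n k l = wignerW P Q p q n k.rev l.rev :=
  wignerW_reflection_symm_general P Q hPh hQh hPtri hQtri hQreal hPimag p q hpsym hqsym n
end
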